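/- arXiv:2603.03107 — 5 statements merged into one kernel-verified Lean document; each statement's English description precedes it below -/
import Mathlib

section
/- Problems (L) and (F) have the same optimal value, V_(L) = V_(F), and their global minimizers transform into each other: 𝒢_(L) = {(XYᵀ, S) : (X, Y, S) ∈ 𝒢_(F)}. -/
/-!
Since `rank (X * Yᵀ) ≤ min (nnzc X) (nnzc Y)`, the map `(X, Y, S) ↦ (X * Yᵀ, S)` sends feasible
points of (F) to feasible points of (L) without increasing the objective. Conversely, a rank
factorization `Z = B * Cᵀ` through `rank Z` columns, padded with zero columns up to `d`, lifts every
feasible point of (L) to one of (F) with objective at most (hence equal to) that of `(Z, S)`. A map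
with these two properties identifies the optimal values and carries minimizers onto minimizers.
-/

open Matrix Set

attribute [local instance] Matrix.frobeniusNormedAddCommGroup

noncomputable section

/-- number of nonzero entries (the ℓ0-norm). -/
def l0 {m n : ℕ} (S : Matrix (Fin m) (Fin n) ℝ) : ℕ :=
  {p : Fin m × Fin n | S p.1 p.2 ≠ 0}.ncard

/-- number of nonzero columns. -/
def nnzc {m d : ℕ} (X : Matrix (Fin m) (Fin d) ℝ) : ℕ :=
  {i : Fin d | ∃ j, X j i ≠ 0}.ncard

/-- set of global minimizers of `g` on the feasible set `s`. -/
def globMin {α : Type*} (g : α → ℝ) (s : Set α) : Set α :=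
  {a ∈ s | ∀ b ∈ s, g a ≤ g b}

/-- optimal value of the problem of minimizing `g` over `s`. -/
def optVal {α : Type*} (g : α → ℝ) (s : Set α) : ℝ :=
  sInf (g '' s)

section Reduction

variable {α β : Type*} {g : α → ℝ} {s : Set α} {h : β → ℝ} {t : Set β} {φ : β → α}

-- The nonemptiness condition takes care of `sInf ∅ = 0`.
theorem Real.sInf_eq_of_lowerBounds_eq {S T : Set ℝ} (hlb : lowerBounds S = lowerBounds T)
    (hne : S.Nonempty ↔ T.Nonempty) : sInf S = sInf T := by
  by_cases hS : S.Nonempty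
  · by_cases hb : BddBelow S
    · have hT : IsGLB T (sInf S) := by
        simpa only [IsGLB, hlb] using isGLB_csInf hS hb
      exact (hT.csInf_eq (hne.1 hS)).symm
    · have hbT : ¬BddBelow T := by rwa [BddBelow, ← hlb]
      rw [Real.sInf_of_not_bddBelow hb, Real.sInf_of_not_bddBelow hbT]
  · rw [Set.not_nonempty_iff_eq_empty.1 hS, Set.not_nonempty_iff_eq_empty.1 (mt hne.2 hS)]

variable (hmaps : ∀ x ∈ t, φ x ∈ s) (hle : ∀ x ∈ t, g (φ x) ≤ h x)
  (hlift : ∀ p ∈ s, ∃ x ∈ t, φ x = p ∧ h x ≤ g p)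
include hmaps hle hlift

theorem optVal_eq_of_lift : optVal g s = optVal h t := by
  refine Real.sInf_eq_of_lowerBounds_eq ?_ ?_
  · ext c
    simp only [mem_lowerBounds, Set.forall_mem_image]
    constructor
    · exact fun hc x hx => (hc (hmaps x hx)).trans (hle x hx)
    · intro hc p hp
      obtain ⟨x, hx, -, hxp⟩ := hlift p hp
      exact (hc hx).trans hxp
  · simp only [Set.image_nonempty]
    exact ⟨fun ⟨p, hp⟩ => (hlift p hp).imp fun x hx => hx.1,
      fun ⟨x, hx⟩ => ⟨φ x, hmaps x hx⟩⟩

theorem globMin_eq_image_of_lift : globMin g s = φ '' globMin h t := by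
  ext p
  constructor
  · rintro ⟨hp, hpmin⟩
    obtain ⟨x, hx, rfl, hxp⟩ := hlift p hp
    exact ⟨x, ⟨hx, fun y hy => hxp.trans ((hpmin _ (hmaps y hy)).trans (hle y hy))⟩, rfl⟩
  · rintro ⟨x, ⟨hx, hxmin⟩, rfl⟩
    refine ⟨hmaps x hx, fun q hq => ?_⟩
    obtain ⟨y, hy, -, hyq⟩ := hlift q hq
    exact (hle x hx).trans ((hxmin y hy).trans hyq)

end Reduction

theorem Matrix.exists_mul_transpose_eq_of_rank {K m n : Type*} [Field K] [Fintype m]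
    [Fintype n] (Z : Matrix m n K) :
    ∃ (B : Matrix m (Fin Z.rank) K) (C : Matrix n (Fin Z.rank) K), B * Cᵀ = Z := by
  set V := Submodule.span K (Set.range Zᵀ)
  let b : Module.Basis (Fin Z.rank) K V :=
    Module.finBasisOfFinrankEq K V Z.rank_eq_finrank_span_cols.symm
  let col (j : n) : V := ⟨Zᵀ j, Submodule.subset_span ⟨j, rfl⟩⟩
  refine ⟨of fun i k => (b k : m → K) i, of fun j k => b.repr (col j) k, ?_⟩
  ext i j
  have hcol := congrArg (fun v : V => (v : m → K) i) (b.sum_repr (col j))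
  simp only [Submodule.coe_sum, Submodule.coe_smul, Finset.sum_apply, Pi.smul_apply,
    smul_eq_mul] at hcol
  simp only [mul_apply, transpose_apply, of_apply]
  simp_rw [mul_comm ((b _ : m → K) i)]
  exact hcol

theorem rank_le_nnzc {a b : ℕ} (X : Matrix (Fin a) (Fin b) ℝ) : X.rank ≤ nnzc X := by
  classical
  let w : Fin b → ℝ := fun k => if ∃ i, X i k ≠ 0 then 1 else 0
  have hw : ∀ k, w k ≠ 0 ↔ ∃ i, X i k ≠ 0 := fun k => by
    by_cases hk : ∃ i, X i k ≠ 0 <;> simp [w, hk]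
  have hX : X * diagonal w = X := by
    ext i k
    by_cases hk : ∃ i, X i k ≠ 0
    · simp [w, hk]
    · push Not at hk
      simp [hk]
  calc X.rank = (X * diagonal w).rank := by rw [hX]
    _ ≤ (diagonal w).rank := rank_mul_le_right _ _
    _ = nnzc X := by
      rw [rank_diagonal, nnzc, ← Nat.card_coe_set_eq, Nat.card_eq_fintype_card]
      exact Fintype.card_congr (Equiv.subtypeEquivRight hw)

theorem two_mul_rank_mul_transpose_le_nnzc {a b d : ℕ} (X : Matrix (Fin a) (Fin d) ℝ)
    (Y : Matrix (Fin b) (Fin d) ℝ) : 2 * (X * Yᵀ).rank ≤ nnzc X + nnzc Y := by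
  have hX := (rank_mul_le_left X Yᵀ).trans (rank_le_nnzc X)
  have hY := (rank_mul_le_right X Yᵀ).trans (Yᵀ.rank_transpose ▸ rank_le_nnzc Y)
  omega

theorem nnzc_mul_le {a b c : ℕ} (A : Matrix (Fin a) (Fin b) ℝ) (B : Matrix (Fin b) (Fin c) ℝ) :
    nnzc (A * B) ≤ nnzc B := by
  refine Set.ncard_le_ncard (fun k ⟨i, hi⟩ => ?_) (Set.toFinite _)
  by_contra! hB
  simp_all [mul_apply]

theorem nnzc_submatrix_one_le {r d : ℕ} (e : Fin r → Fin d) :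
    nnzc ((1 : Matrix (Fin d) (Fin d) ℝ).submatrix e id) ≤ r := by
  calc nnzc ((1 : Matrix (Fin d) (Fin d) ℝ).submatrix e id) ≤ (Set.range e).ncard := by
        refine Set.ncard_le_ncard (fun k ⟨i, hi⟩ => ⟨i, ?_⟩) (Set.toFinite _)
        by_contra h
        exact hi (one_apply_ne h)
    _ ≤ r := by
        rw [← Set.image_univ]
        exact (Set.ncard_image_le (Set.toFinite _)).trans (by simp)

theorem exists_mul_transpose_eq_nnzc_le_rank {a b d : ℕ} (Z : Matrix (Fin a) (Fin b) ℝ)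
    (h : Z.rank ≤ d) : ∃ (X : Matrix (Fin a) (Fin d) ℝ) (Y : Matrix (Fin b) (Fin d) ℝ),
      X * Yᵀ = Z ∧ nnzc X ≤ Z.rank ∧ nnzc Y ≤ Z.rank := by
  obtain ⟨B, C, hBC⟩ := Z.exists_mul_transpose_eq_of_rank
  set E := (1 : Matrix (Fin d) (Fin d) ℝ).submatrix (Fin.castLE h) id
  have hE : E * Eᵀ = 1 := by
    rw [transpose_submatrix, transpose_one, ← submatrix_mul _ _ _ _ _ Function.bijective_id,
      Matrix.mul_one, submatrix_one _ (Fin.castLE_injective h)]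
  refine ⟨B * E, C * E, ?_, (nnzc_mul_le _ _).trans (nnzc_submatrix_one_le _),
    (nnzc_mul_le _ _).trans (nnzc_submatrix_one_le _)⟩
  rw [transpose_mul, Matrix.mul_assoc, ← Matrix.mul_assoc E, hE, Matrix.one_mul, hBC]

theorem stmt0_general (m n d : ℕ)
    (lam beta : ℝ) (hlam : 0 ≤ lam)
    (f : Matrix (Fin m) (Fin n) ℝ → Matrix (Fin m) (Fin n) ℝ → ℝ)
    (BS : Set (Matrix (Fin m) (Fin n) ℝ))
    (F0 : Matrix (Fin m) (Fin n) ℝ × Matrix (Fin m) (Fin n) ℝ → ℝ)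
    (hF0 : F0 = fun p => f p.1 p.2 + 2 * lam * (p.1.rank : ℝ) + beta * (l0 p.2 : ℝ))
    (feasL : Set (Matrix (Fin m) (Fin n) ℝ × Matrix (Fin m) (Fin n) ℝ))
    (hfeasL : feasL = {p | p.1.rank ≤ d ∧ p.2 ∈ BS})
    (FF : Matrix (Fin m) (Fin d) ℝ × Matrix (Fin n) (Fin d) ℝ × Matrix (Fin m) (Fin n) ℝ → ℝ)
    (hFF : FF = fun t => f (t.1 * t.2.1ᵀ) t.2.2 +
      lam * ((nnzc t.1 : ℝ) + (nnzc t.2.1 : ℝ)) + beta * (l0 t.2.2 : ℝ))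
    (feasF : Set (Matrix (Fin m) (Fin d) ℝ × Matrix (Fin n) (Fin d) ℝ × Matrix (Fin m) (Fin n) ℝ))
    (hfeasF : feasF = {t | t.2.2 ∈ BS}) :
    optVal F0 feasL = optVal FF feasF ∧
    globMin F0 feasL = (fun t => (t.1 * t.2.1ᵀ, t.2.2)) '' globMin FF feasF := by
  subst hF0 hfeasL hFF hfeasF
  refine ⟨optVal_eq_of_lift ?maps ?le ?lift, globMin_eq_image_of_lift ?maps ?le ?lift⟩
  case maps => exact fun t ht => ⟨(rank_mul_le_left _ _).trans (rank_le_width _), ht⟩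
  case le =>
    rintro ⟨X, Y, S⟩ -
    have hXY : (2 * (X * Yᵀ).rank : ℝ) ≤ nnzc X + nnzc Y := by
      exact_mod_cast two_mul_rank_mul_transpose_le_nnzc X Y
    dsimp only
    nlinarith
  case lift =>
    rintro ⟨Z, S⟩ ⟨hZ, hS⟩
    obtain ⟨X, Y, rfl, hX, hY⟩ := exists_mul_transpose_eq_nnzc_le_rank Z hZ
    refine ⟨(X, Y, S), hS, rfl, ?_⟩
    have hXY : (nnzc X + nnzc Y : ℝ) ≤ 2 * (X * Yᵀ).rank := by
      exact_mod_cast (add_le_add hX hY).trans_eq (two_mul _).symm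
    dsimp only
    nlinarith

/-- Problems (L) and (F) have the same optimal value and their global minimizers
transform into each other. -/
theorem stmt0 (m n d : ℕ) (hm : 0 < m) (hn : 0 < n) (hd : 0 < d)
    (lam beta : ℝ) (hlam : 0 ≤ lam) (hbeta : 0 ≤ beta)
    (f : Matrix (Fin m) (Fin n) ℝ → Matrix (Fin m) (Fin n) ℝ → ℝ)
    (hf0 : ∀ Z S, 0 ≤ f Z S)
    (hfLip : LocallyLipschitz fun p : Matrix (Fin m) (Fin n) ℝ × Matrix (Fin m) (Fin n) ℝ =>
      f p.1 p.2)
    (κ1 κ2 : Fin m → Fin n → EReal)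
    (hκ1 : ∀ i j, κ1 i j ≤ 0) (hκ2 : ∀ i j, 0 ≤ κ2 i j)
    (BS : Set (Matrix (Fin m) (Fin n) ℝ))
    (hBS : BS = {S | ∀ i j, κ1 i j ≤ (S i j : EReal) ∧ (S i j : EReal) ≤ κ2 i j})
    (F0 : Matrix (Fin m) (Fin n) ℝ × Matrix (Fin m) (Fin n) ℝ → ℝ)
    (hF0 : F0 = fun p => f p.1 p.2 + 2 * lam * (p.1.rank : ℝ) + beta * (l0 p.2 : ℝ))
    (feasL : Set (Matrix (Fin m) (Fin n) ℝ × Matrix (Fin m) (Fin n) ℝ))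
    (hfeasL : feasL = {p | p.1.rank ≤ d ∧ p.2 ∈ BS})
    (FF : Matrix (Fin m) (Fin d) ℝ × Matrix (Fin n) (Fin d) ℝ × Matrix (Fin m) (Fin n) ℝ → ℝ)
    (hFF : FF = fun t => f (t.1 * t.2.1ᵀ) t.2.2 +
      lam * ((nnzc t.1 : ℝ) + (nnzc t.2.1 : ℝ)) + beta * (l0 t.2.2 : ℝ))
    (feasF : Set (Matrix (Fin m) (Fin d) ℝ × Matrix (Fin n) (Fin d) ℝ × Matrix (Fin m) (Fin n) ℝ))
    (hfeasF : feasF = {t | t.2.2 ∈ BS}) :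
    optVal F0 feasL = optVal FF feasF ∧
    globMin F0 feasL = (fun t => (t.1 * t.2.1ᵀ, t.2.2)) '' globMin FF feasF :=
  stmt0_general m n d lam beta hlam f BS F0 hF0 feasL hfeasL FF hFF feasF hfeasF
end
end

section
/- Let (Z̄, S̄) ∈ 𝓑^Z × 𝓑^S with rank(Z̄) ≤ d. Then (Z̄, S̄) is a local minimizer of problem (LB) if and only if (Z̄, S̄) is a local minimizer of f on 𝓑^Z_{λ,Z̄} × underline-𝓑^S_{𝕁_{S̄}}, where 𝓑^Z_{λ,Z̄} := {Z ∈ 𝓑^Z : rank(Z) ≤ d and λ·rank(Z) = λ·rank(Z̄)}. -/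
/-!
On the restricted set the penalty `2λ·rank Z + β·‖S‖₀` never exceeds its value at `(Z̄, S̄)`,
so a local minimizer of `F₀` is one of `f` there. Conversely, rank and support size are lower
semicontinuous and integer valued: near `(Z̄, S̄)` a feasible point either has the same penalty
terms as its retraction to the restricted set (keep `Z` iff `λ·rank Z = λ·rank Z̄`, zero the
entries of `S` outside `𝕁_{S̄}`), or pays a jump of at least `2λ` resp. `β`. The retraction moves
a point by at most its distance to `(Z̄, S̄)`, so near `(Z̄, S̄)` the Lipschitz change of `f`
is dominated by the jump.
-/

open Matrix Set

attribute [local instance] Matrix.frobeniusNormedAddCommGroup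

noncomputable section

/-- the matrix obtained from `U` by zeroing all entries outside the index set `J`. -/
def restrictE {m n : ℕ} (J : Set (Fin m × Fin n)) (U : Matrix (Fin m) (Fin n) ℝ) :
    Matrix (Fin m) (Fin n) ℝ :=
  fun i j => J.indicator (fun p => U p.1 p.2) (i, j)

/-- the entry index set `𝕁_S`: the support of `S` if `β > 0`, all entries if `β = 0`. -/
def entryIdx {m n : ℕ} (beta : ℝ) (S : Matrix (Fin m) (Fin n) ℝ) : Set (Fin m × Fin n) :=
  {p | 0 < beta → S p.1 p.2 ≠ 0}

open Filter Topology NNReal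

section ExactPenalty

variable {X : Type*} [PseudoMetricSpace X] {g P : X → ℝ} {s t : Set X} {x : X} {π : X → X}

theorem IsLocalMinOn.of_add_of_le (h : IsLocalMinOn (fun y => g y + P y) s x) (hts : t ⊆ s)
    (hP : ∀ y ∈ t, P y ≤ P x) : IsLocalMinOn g t x := by
  filter_upwards [h.on_subset hts, self_mem_nhdsWithin] with y hy hyt
  linarith [hP y hyt]

theorem tendsto_dist_apply_self_of_dist_le (hπ : ∀ y, dist (π y) y ≤ dist y x) :
    Tendsto (fun y => dist (π y) y) (𝓝 x) (𝓝 0) :=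
  squeeze_zero (fun _ => dist_nonneg) hπ (tendsto_iff_dist_tendsto_zero.1 tendsto_id)

theorem IsLocalMinOn.add_of_penalty (hmin : IsLocalMinOn g t x) (hg : LocallyLipschitz g)
    (hπt : ∀ᶠ y in 𝓝[s] x, π y ∈ t) (hπ : ∀ y, dist (π y) y ≤ dist y x)
    (hP : ∀ c : ℝ≥0, ∀ᶠ y in 𝓝 x, c * dist (π y) y ≤ P y - P x) :
    IsLocalMinOn (fun y => g y + P y) s x := by
  obtain ⟨K, U, hU, hK⟩ := hg x
  have hπx : Tendsto π (𝓝 x) (𝓝 x) :=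
    (tendsto_iff_of_dist (tendsto_dist_apply_self_of_dist_le hπ)).2 tendsto_id
  have hgπ : ∀ᶠ y in 𝓝[s] x, g x ≤ g (π y) :=
    (tendsto_nhdsWithin_iff.2 ⟨hπx.mono_left nhdsWithin_le_nhds, hπt⟩).eventually hmin
  filter_upwards [hgπ, nhdsWithin_le_nhds (hP K), nhdsWithin_le_nhds hU,
    nhdsWithin_le_nhds (hπx hU)] with y hgy hPy hyU hπyU
  have hLip : g (π y) - g y ≤ K * dist (π y) y :=
    (le_abs_self _).trans ((Real.dist_eq _ _).symm.trans_le (hK.dist_le_mul _ hπyU _ hyU))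
  linarith

theorem eventually_mul_dist_le_sub_of_jump {a : ℝ} (ha : 0 < a)
    (hπ : ∀ y, dist (π y) y ≤ dist y x)
    (hjump : ∀ᶠ y in 𝓝 x, P x ≤ P y ∧ (π y ≠ y → P x + a ≤ P y)) (c : ℝ) :
    ∀ᶠ y in 𝓝 x, c * dist (π y) y ≤ P y - P x := by
  have hsmall : ∀ᶠ y in 𝓝 x, c * dist (π y) y < a := by
    have := (tendsto_dist_apply_self_of_dist_le hπ).const_mul c
    rw [mul_zero] at this
    exact this.eventually (gt_mem_nhds ha)
  filter_upwards [hjump, hsmall] with y ⟨hle, hgap⟩ hy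
  by_cases hfix : π y = y
  · simpa [hfix] using hle
  · linarith [hgap hfix]

theorem eventually_mul_dist_prodMap_le {Y : Type*} [PseudoMetricSpace Y] {π' : Y → Y}
    {Q : Y → ℝ} {x' : Y}
    (hP : ∀ c : ℝ, ∀ᶠ y in 𝓝 x, c * dist (π y) y ≤ P y - P x)
    (hQ : ∀ c : ℝ, ∀ᶠ y in 𝓝 x', c * dist (π' y) y ≤ Q y - Q x') (c : ℝ≥0) :
    ∀ᶠ z in 𝓝 (x, x'), c * dist (Prod.map π π' z) z ≤ (P z.1 + Q z.2) - (P x + Q x') := by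
  filter_upwards [(hP c).prod_nhds (hQ c)] with z ⟨h₁, h₂⟩
  calc (c : ℝ) * dist (Prod.map π π' z) z
      ≤ c * (dist (π z.1) z.1 + dist (π' z.2) z.2) := by
        gcongr
        exact max_le_add_of_nonneg dist_nonneg dist_nonneg
    _ ≤ _ := by linarith

end ExactPenalty

theorem Matrix.eventually_rank_le_rank {m n 𝕜 : Type*} [Fintype m] [Fintype n] [DecidableEq n]
    [NontriviallyNormedField 𝕜] [CompleteSpace 𝕜] (A : Matrix m n 𝕜) :
    ∀ᶠ B in 𝓝 A, A.rank ≤ B.rank := by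
  let Φ : Matrix m n 𝕜 →ₗ[𝕜] (n → 𝕜) →L[𝕜] (m → 𝕜) :=
    LinearMap.toContinuousLinearMap.toLinearMap ∘ₗ Matrix.toLin'.toLinearMap
  have hrank (B : Matrix m n 𝕜) : (Φ B : (n → 𝕜) →ₗ[𝕜] (m → 𝕜)).rank = B.rank :=
    (Module.finrank_eq_rank _ _).symm
  have hopen := (isOpen_setOfPred_nat_le_rank (𝕜 := 𝕜) (E := n → 𝕜) (F := m → 𝕜)
    A.rank).preimage Φ.continuous_of_finiteDimensional
  filter_upwards [hopen.mem_nhds (by simp [hrank])] with B hB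
  simpa [hrank] using hB

theorem Matrix.frobenius_norm_le_of_forall_norm_le {m n α : Type*} [Fintype m] [Fintype n]
    [NormedAddCommGroup α] {A B : Matrix m n α} (h : ∀ i j, ‖A i j‖ ≤ ‖B i j‖) :
    ‖A‖ ≤ ‖B‖ := by
  rw [Matrix.frobenius_norm_def, Matrix.frobenius_norm_def]
  gcongr with i _ j _
  exact h i j

section LowRankSparse

variable {m n : ℕ}

def rankLevelRetract (lam : ℝ) (Zbar Z : Matrix (Fin m) (Fin n) ℝ) : Matrix (Fin m) (Fin n) ℝ :=
  if lam * (Z.rank : ℝ) = lam * (Zbar.rank : ℝ) then Z else Zbar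

theorem dist_rankLevelRetract_le (lam : ℝ) (Zbar Z : Matrix (Fin m) (Fin n) ℝ) :
    dist (rankLevelRetract lam Zbar Z) Z ≤ dist Z Zbar := by
  unfold rankLevelRetract
  split_ifs
  · simp
  · rw [dist_comm]

theorem rankLevelRetract_mem {lam : ℝ} {Zbar Z : Matrix (Fin m) (Fin n) ℝ}
    {p : Matrix (Fin m) (Fin n) ℝ → Prop} (hZ : p Z) (hZbar : p Zbar) :
    p (rankLevelRetract lam Zbar Z) ∧
      lam * ((rankLevelRetract lam Zbar Z).rank : ℝ) = lam * (Zbar.rank : ℝ) := by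
  unfold rankLevelRetract
  split_ifs with hlevel
  exacts [⟨hZ, hlevel⟩, ⟨hZbar, rfl⟩]

theorem eventually_mul_dist_rankLevelRetract_le {lam : ℝ} (hlam : 0 ≤ lam)
    (Zbar : Matrix (Fin m) (Fin n) ℝ) (c : ℝ) :
    ∀ᶠ Z in 𝓝 Zbar, c * dist (rankLevelRetract lam Zbar Z) Z ≤
      2 * lam * (Z.rank : ℝ) - 2 * lam * (Zbar.rank : ℝ) := by
  rcases hlam.eq_or_lt with rfl | hlam
  · simp [rankLevelRetract]
  refine eventually_mul_dist_le_sub_of_jump (P := fun Z => 2 * lam * (Z.rank : ℝ))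
    (by positivity : 0 < 2 * lam) (dist_rankLevelRetract_le lam Zbar) ?_ c
  filter_upwards [Zbar.eventually_rank_le_rank] with Z hZ
  refine ⟨by gcongr, fun hne => ?_⟩
  have hjump : Zbar.rank + 1 ≤ Z.rank := by
    unfold rankLevelRetract at hne
    split_ifs at hne with hlevel
    · exact absurd rfl hne
    · have : Z.rank ≠ Zbar.rank := fun h => hlevel (by rw [h])
      omega
  have : (Zbar.rank : ℝ) + 1 ≤ Z.rank := by exact_mod_cast hjump
  nlinarith

theorem notMem_entryIdx {beta : ℝ} {S : Matrix (Fin m) (Fin n) ℝ} {p : Fin m × Fin n} :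
    p ∉ entryIdx beta S ↔ 0 < beta ∧ S p.1 p.2 = 0 := by
  simp [entryIdx]

theorem apply_eq_zero_of_notMem_entryIdx {beta : ℝ} {S : Matrix (Fin m) (Fin n) ℝ}
    {p : Fin m × Fin n} (hp : p ∉ entryIdx beta S) : S p.1 p.2 = 0 :=
  (notMem_entryIdx.1 hp).2

theorem restrictE_eq_self {J : Set (Fin m × Fin n)} {S : Matrix (Fin m) (Fin n) ℝ}
    (h : ∀ p ∉ J, S p.1 p.2 = 0) : restrictE J S = S := by
  ext i j
  by_cases hij : (i, j) ∈ J
  · simp [restrictE, hij]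
  · simp [restrictE, hij, h (i, j) hij]

theorem restrictE_mem_box {κ1 κ2 : Fin m → Fin n → EReal} (hκ1 : ∀ i j, κ1 i j ≤ 0)
    (hκ2 : ∀ i j, 0 ≤ κ2 i j) (J : Set (Fin m × Fin n)) {S : Matrix (Fin m) (Fin n) ℝ}
    (hS : ∀ i j, κ1 i j ≤ (S i j : EReal) ∧ (S i j : EReal) ≤ κ2 i j) (i : Fin m) (j : Fin n) :
    κ1 i j ≤ (restrictE J S i j : EReal) ∧ (restrictE J S i j : EReal) ≤ κ2 i j := by
  by_cases hij : (i, j) ∈ J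
  · simpa [restrictE, hij] using hS i j
  · simpa [restrictE, hij] using ⟨hκ1 i j, hκ2 i j⟩

theorem dist_restrictE_le {J : Set (Fin m × Fin n)} {Sbar : Matrix (Fin m) (Fin n) ℝ}
    (h : ∀ p ∉ J, Sbar p.1 p.2 = 0) (S : Matrix (Fin m) (Fin n) ℝ) :
    dist (restrictE J S) S ≤ dist S Sbar := by
  rw [dist_eq_norm, dist_eq_norm]
  refine Matrix.frobenius_norm_le_of_forall_norm_le fun i j => ?_
  by_cases hij : (i, j) ∈ J
  · simp [restrictE, hij]
  · simp [restrictE, hij, h (i, j) hij]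

theorem l0_le_l0 {S T : Matrix (Fin m) (Fin n) ℝ}
    (h : ∀ p : Fin m × Fin n, S p.1 p.2 ≠ 0 → T p.1 p.2 ≠ 0) : l0 S ≤ l0 T :=
  Set.ncard_le_ncard h (Set.toFinite _)

theorem l0_lt_l0 {S T : Matrix (Fin m) (Fin n) ℝ}
    (h : ∀ p : Fin m × Fin n, S p.1 p.2 ≠ 0 → T p.1 p.2 ≠ 0) (p : Fin m × Fin n)
    (hS : S p.1 p.2 = 0) (hT : T p.1 p.2 ≠ 0) : l0 S < l0 T :=
  Set.ncard_lt_ncard ⟨h, fun hsub => hsub hT hS⟩ (Set.toFinite _)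

theorem eventually_apply_ne_zero (Sbar : Matrix (Fin m) (Fin n) ℝ) :
    ∀ᶠ S in 𝓝 Sbar, ∀ p : Fin m × Fin n, Sbar p.1 p.2 ≠ 0 → S p.1 p.2 ≠ 0 := by
  refine eventually_all.2 fun p => ?_
  by_cases hp : Sbar p.1 p.2 = 0
  · exact .of_forall fun _ h => absurd hp h
  · filter_upwards [(continuous_apply_apply p.1 p.2).continuousAt.eventually_ne hp] with S hS
    exact fun _ => hS

theorem mul_l0_restrictE_entryIdx_le {beta : ℝ} (hbeta : 0 ≤ beta)
    (Sbar U : Matrix (Fin m) (Fin n) ℝ) :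
    beta * (l0 (restrictE (entryIdx beta Sbar) U) : ℝ) ≤ beta * (l0 Sbar : ℝ) := by
  rcases hbeta.eq_or_lt with rfl | hbeta
  · simp
  gcongr
  refine l0_le_l0 fun p hp => ?_
  have hpJ : p ∈ entryIdx beta Sbar := by
    by_contra hpJ
    simp [restrictE, hpJ] at hp
  exact hpJ hbeta

theorem eventually_mul_dist_restrictE_le {beta : ℝ} (hbeta : 0 ≤ beta)
    (Sbar : Matrix (Fin m) (Fin n) ℝ) (c : ℝ) :
    ∀ᶠ S in 𝓝 Sbar, c * dist (restrictE (entryIdx beta Sbar) S) S ≤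
      beta * (l0 S : ℝ) - beta * (l0 Sbar : ℝ) := by
  rcases hbeta.eq_or_lt with rfl | hbeta
  · simp [restrictE_eq_self fun p hp => absurd (notMem_entryIdx.1 hp).1 (lt_irrefl 0)]
  refine eventually_mul_dist_le_sub_of_jump (P := fun S => beta * (l0 S : ℝ)) hbeta
    (dist_restrictE_le fun _ => apply_eq_zero_of_notMem_entryIdx) ?_ c
  filter_upwards [eventually_apply_ne_zero Sbar] with S hS
  refine ⟨by gcongr; exact l0_le_l0 hS, fun hne => ?_⟩
  obtain ⟨p, hpJ, hSp⟩ : ∃ p ∉ entryIdx beta Sbar, S p.1 p.2 ≠ 0 := by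
    by_contra! h
    exact hne (restrictE_eq_self h)
  have hjump : (l0 Sbar : ℝ) + 1 ≤ l0 S := by
    exact_mod_cast l0_lt_l0 hS p (apply_eq_zero_of_notMem_entryIdx hpJ) hSp
  nlinarith

end LowRankSparse

theorem stmt2_general (m n d : ℕ)
    (lam beta : ℝ) (hlam : 0 ≤ lam) (hbeta : 0 ≤ beta)
    (f : Matrix (Fin m) (Fin n) ℝ → Matrix (Fin m) (Fin n) ℝ → ℝ)
    (hfLip : LocallyLipschitz fun p : Matrix (Fin m) (Fin n) ℝ × Matrix (Fin m) (Fin n) ℝ =>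
      f p.1 p.2)
    (κ1 κ2 : Fin m → Fin n → EReal)
    (hκ1 : ∀ i j, κ1 i j ≤ 0) (hκ2 : ∀ i j, 0 ≤ κ2 i j)
    (BS : Set (Matrix (Fin m) (Fin n) ℝ))
    (hBS : BS = {S | ∀ i j, κ1 i j ≤ (S i j : EReal) ∧ (S i j : EReal) ≤ κ2 i j})
    (BZ : Set (Matrix (Fin m) (Fin n) ℝ))
    -- objective and feasible set of problem (LB)
    (F0 : Matrix (Fin m) (Fin n) ℝ × Matrix (Fin m) (Fin n) ℝ → ℝ)
    (hF0 : F0 = fun p => f p.1 p.2 + 2 * lam * (p.1.rank : ℝ) + beta * (l0 p.2 : ℝ))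
    (feasLB : Set (Matrix (Fin m) (Fin n) ℝ × Matrix (Fin m) (Fin n) ℝ))
    (hfeasLB : feasLB = {p | p.1 ∈ BZ ∧ p.1.rank ≤ d ∧ p.2 ∈ BS})
    -- the given point
    (Zbar Sbar : Matrix (Fin m) (Fin n) ℝ)
    (hZbar : Zbar ∈ BZ) (hSbar : Sbar ∈ BS) (hrank : Zbar.rank ≤ d)
    -- the restricted set 𝓑^Z_{λ,Z̄} × underline-𝓑^S_{𝕁_{S̄}}
    (BZr : Set (Matrix (Fin m) (Fin n) ℝ))
    (hBZr : BZr = {Z ∈ BZ | Z.rank ≤ d ∧ lam * (Z.rank : ℝ) = lam * (Zbar.rank : ℝ)})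
    (restr : Set (Matrix (Fin m) (Fin n) ℝ × Matrix (Fin m) (Fin n) ℝ))
    (hrestr : restr = BZr ×ˢ (restrictE (entryIdx beta Sbar) '' BS)) :
    ((Zbar, Sbar) ∈ feasLB ∧ IsLocalMinOn F0 feasLB (Zbar, Sbar)) ↔
    ((Zbar, Sbar) ∈ restr ∧
      IsLocalMinOn (fun p : Matrix (Fin m) (Fin n) ℝ × Matrix (Fin m) (Fin n) ℝ => f p.1 p.2)
        restr (Zbar, Sbar)) := by
  subst hBS
  set π := Prod.map (rankLevelRetract lam Zbar) (restrictE (entryIdx beta Sbar))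
  have hbar_restr : (Zbar, Sbar) ∈ restr := by
    rw [hrestr, hBZr]
    exact ⟨⟨hZbar, hrank, rfl⟩, Sbar, hSbar,
      restrictE_eq_self fun _ => apply_eq_zero_of_notMem_entryIdx⟩
  have hrestr_feas : restr ⊆ feasLB := by
    rw [hrestr, hBZr, hfeasLB]
    rintro ⟨Z, S⟩ ⟨⟨hZ, hZd, -⟩, U, hU, rfl⟩
    exact ⟨hZ, hZd, restrictE_mem_box hκ1 hκ2 _ hU⟩
  have hπ_restr : ∀ z ∈ feasLB, π z ∈ restr := by
    rw [hrestr, hBZr, hfeasLB]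
    rintro ⟨Z, S⟩ ⟨hZ, hZd, hS⟩
    obtain ⟨⟨hZ', hZd'⟩, hlevel⟩ :=
      rankLevelRetract_mem (lam := lam) (p := fun Z => Z ∈ BZ ∧ Z.rank ≤ d)
        ⟨hZ, hZd⟩ ⟨hZbar, hrank⟩
    exact ⟨⟨hZ', hZd', hlevel⟩, S, hS, rfl⟩
  have hF0' : F0 = fun p => f p.1 p.2 + (2 * lam * (p.1.rank : ℝ) + beta * (l0 p.2 : ℝ)) := by
    rw [hF0]; funext p; ring
  rw [hF0']
  constructor
  · rintro ⟨-, hmin⟩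
    refine ⟨hbar_restr, hmin.of_add_of_le hrestr_feas ?_⟩
    rw [hrestr, hBZr]
    rintro ⟨Z, S⟩ ⟨⟨-, -, hZ⟩, U, -, rfl⟩
    linarith [mul_l0_restrictE_entryIdx_le hbeta Sbar U]
  · rintro ⟨-, hmin⟩
    refine ⟨hrestr_feas hbar_restr, hmin.add_of_penalty hfLip
      (eventually_mem_nhdsWithin.mono hπ_restr) (fun z => ?_)
      (eventually_mul_dist_prodMap_le (eventually_mul_dist_rankLevelRetract_le hlam Zbar)
        (eventually_mul_dist_restrictE_le hbeta Sbar))⟩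
    exact max_le_max (dist_rankLevelRetract_le lam Zbar z.1)
      (dist_restrictE_le (fun _ => apply_eq_zero_of_notMem_entryIdx) z.2)

/-- `(Z̄,S̄)` is a local minimizer of problem (LB) iff it is a local minimizer of `f`
on `𝓑^Z_{λ,Z̄} × underline-𝓑^S_{𝕁_{S̄}}`. -/
theorem stmt2 (m n d : ℕ) (hm : 0 < m) (hn : 0 < n) (hd : 0 < d)
    (lam beta : ℝ) (hlam : 0 ≤ lam) (hbeta : 0 ≤ beta)
    (f : Matrix (Fin m) (Fin n) ℝ → Matrix (Fin m) (Fin n) ℝ → ℝ)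
    (hf0 : ∀ Z S, 0 ≤ f Z S)
    (hfLip : LocallyLipschitz fun p : Matrix (Fin m) (Fin n) ℝ × Matrix (Fin m) (Fin n) ℝ =>
      f p.1 p.2)
    (κ1 κ2 : Fin m → Fin n → EReal)
    (hκ1 : ∀ i j, κ1 i j ≤ 0) (hκ2 : ∀ i j, 0 ≤ κ2 i j)
    (BS : Set (Matrix (Fin m) (Fin n) ℝ))
    (hBS : BS = {S | ∀ i j, κ1 i j ≤ (S i j : EReal) ∧ (S i j : EReal) ≤ κ2 i j})
    -- the box constraint set 𝓑^Z, with possibly infinite bounds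
    (κZ1 κZ2 : Fin m → Fin n → EReal)
    (BZ : Set (Matrix (Fin m) (Fin n) ℝ))
    (hBZ : BZ = {Z | ∀ i j, κZ1 i j ≤ (Z i j : EReal) ∧ (Z i j : EReal) ≤ κZ2 i j})
    -- objective and feasible set of problem (LB)
    (F0 : Matrix (Fin m) (Fin n) ℝ × Matrix (Fin m) (Fin n) ℝ → ℝ)
    (hF0 : F0 = fun p => f p.1 p.2 + 2 * lam * (p.1.rank : ℝ) + beta * (l0 p.2 : ℝ))
    (feasLB : Set (Matrix (Fin m) (Fin n) ℝ × Matrix (Fin m) (Fin n) ℝ))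
    (hfeasLB : feasLB = {p | p.1 ∈ BZ ∧ p.1.rank ≤ d ∧ p.2 ∈ BS})
    -- the given point
    (Zbar Sbar : Matrix (Fin m) (Fin n) ℝ)
    (hZbar : Zbar ∈ BZ) (hSbar : Sbar ∈ BS) (hrank : Zbar.rank ≤ d)
    -- the restricted set 𝓑^Z_{λ,Z̄} × underline-𝓑^S_{𝕁_{S̄}}
    (BZr : Set (Matrix (Fin m) (Fin n) ℝ))
    (hBZr : BZr = {Z ∈ BZ | Z.rank ≤ d ∧ lam * (Z.rank : ℝ) = lam * (Zbar.rank : ℝ)})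
    (restr : Set (Matrix (Fin m) (Fin n) ℝ × Matrix (Fin m) (Fin n) ℝ))
    (hrestr : restr = BZr ×ˢ (restrictE (entryIdx beta Sbar) '' BS)) :
    ((Zbar, Sbar) ∈ feasLB ∧ IsLocalMinOn F0 feasLB (Zbar, Sbar)) ↔
    ((Zbar, Sbar) ∈ restr ∧
      IsLocalMinOn (fun p : Matrix (Fin m) (Fin n) ℝ × Matrix (Fin m) (Fin n) ℝ => f p.1 p.2)
        restr (Zbar, Sbar)) :=
  stmt2_general m n d lam beta hlam hbeta f hfLip κ1 κ2 hκ1 hκ2 BS hBS BZ F0 hF0 feasLB hfeasLB Zbar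
    Sbar hZbar hSbar hrank BZr hBZr restr hrestr
end
end

section
/- If (X, Y, S) ∈ 𝒢_(FB), then 𝕀_X = 𝕀_Y; in particular, when λ > 0, for every column index i one has X_i ≠ 0 if and only if Y_i ≠ 0. -/
open Matrix Set
open scoped ENNReal

attribute [local instance] Matrix.frobeniusNormedAddCommGroup

noncomputable section

/-- Euclidean norm of the `i`-th column. -/
def colNorm {m d : ℕ} (X : Matrix (Fin m) (Fin d) ℝ) (i : Fin d) : ℝ :=
  Real.sqrt (∑ j, (X j i) ^ 2)

/-- the column index set `𝕀_X`: nonzero columns if `λ > 0`, all columns if `λ = 0`. -/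
def colIdx {m d : ℕ} (lam : ℝ) (X : Matrix (Fin m) (Fin d) ℝ) : Set (Fin d) :=
  {i | 0 < lam → ∃ j, X j i ≠ 0}

/-! If column `i` of `Y` vanishes, then the product `X Yᵀ` does not see column `i`
of `X`, so zeroing that column keeps the point feasible and leaves `f (X Yᵀ) S` unchanged while
strictly lowering `nnzc X` when the column was nonzero; for `λ > 0` this contradicts minimality.
The same argument applies with the roles of `X` and `Y` exchanged. -/

section ZeroColumn

variable {m n d : ℕ}

lemma nnzc_updateCol_zero_lt {X : Matrix (Fin m) (Fin d) ℝ} {i : Fin d} (hX : ∃ j, X j i ≠ 0) :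
    nnzc (X.updateCol i 0) < nnzc X := by
  have hcols : {k : Fin d | ∃ j, X.updateCol i 0 j k ≠ 0} = {k | ∃ j, X j k ≠ 0} \ {i} := by
    ext k
    by_cases hk : k = i <;> simp [hk, updateCol_apply]
  rw [nnzc, nnzc, hcols]
  exact ncard_sdiff_singleton_lt_of_mem hX (toFinite _)

lemma colNorm_updateCol_zero_le (X : Matrix (Fin m) (Fin d) ℝ) (i k : Fin d) :
    colNorm (X.updateCol i 0) k ≤ colNorm X k := by
  by_cases hk : k = i
  · simp [colNorm, hk]
  · simp [colNorm, hk]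

lemma updateCol_zero_mul_transpose {X : Matrix (Fin m) (Fin d) ℝ} {Y : Matrix (Fin n) (Fin d) ℝ}
    {i : Fin d} (hY : ∀ j, Y j i = 0) : X.updateCol i 0 * Yᵀ = X * Yᵀ := by
  ext a b
  simp only [mul_apply, transpose_apply]
  refine Finset.sum_congr rfl fun k _ => ?_
  by_cases hk : k = i
  · simp [hk, hY b]
  · simp [hk]

lemma mul_transpose_updateCol_zero {X : Matrix (Fin m) (Fin d) ℝ} {Y : Matrix (Fin n) (Fin d) ℝ}
    {i : Fin d} (hX : ∀ j, X j i = 0) : X * (Y.updateCol i 0)ᵀ = X * Yᵀ := by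
  rw [← transpose_transpose (X * _), transpose_mul, transpose_transpose,
    updateCol_zero_mul_transpose hX, transpose_mul, transpose_transpose]

end ZeroColumn

/-- The constraint set `𝓑^X` (or `𝓑^Y`): every column has Euclidean norm at most `τ`. -/
def colNormBall {m d : ℕ} (τ : ℝ≥0∞) : Set (Matrix (Fin m) (Fin d) ℝ) :=
  {X | ∀ i, ENNReal.ofReal (colNorm X i) ≤ τ}

/-- The objective `F` of problem (FB). -/
def fbObjective {m n d : ℕ} (f : Matrix (Fin m) (Fin n) ℝ → Matrix (Fin m) (Fin n) ℝ → ℝ)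
    (lam beta : ℝ) (t : Matrix (Fin m) (Fin d) ℝ × Matrix (Fin n) (Fin d) ℝ × Matrix (Fin m) (Fin n) ℝ) :
    ℝ :=
  f (t.1 * t.2.1ᵀ) t.2.2 + lam * ((nnzc t.1 : ℝ) + (nnzc t.2.1 : ℝ)) + beta * (l0 t.2.2 : ℝ)

section FB

variable {m n d : ℕ} {f : Matrix (Fin m) (Fin n) ℝ → Matrix (Fin m) (Fin n) ℝ → ℝ}
  {lam beta : ℝ} {X : Matrix (Fin m) (Fin d) ℝ} {Y : Matrix (Fin n) (Fin d) ℝ}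
  {S : Matrix (Fin m) (Fin n) ℝ} {i : Fin d}

lemma updateCol_zero_mem_colNormBall {τ : ℝ≥0∞} {X : Matrix (Fin m) (Fin d) ℝ}
    (hX : X ∈ colNormBall τ) (i : Fin d) : X.updateCol i 0 ∈ colNormBall τ := fun k =>
  (ENNReal.ofReal_le_ofReal (colNorm_updateCol_zero_le X i k)).trans (hX k)

lemma fbObjective_updateCol_left_lt (hlam : 0 < lam) (hX : ∃ j, X j i ≠ 0)
    (hY : ∀ j, Y j i = 0) :
    fbObjective f lam beta (X.updateCol i 0, Y, S) < fbObjective f lam beta (X, Y, S) := by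
  have hlt : (nnzc (X.updateCol i 0) : ℝ) < nnzc X := by exact_mod_cast nnzc_updateCol_zero_lt hX
  simp only [fbObjective, updateCol_zero_mul_transpose hY]
  gcongr

lemma fbObjective_updateCol_right_lt (hlam : 0 < lam) (hX : ∀ j, X j i = 0)
    (hY : ∃ j, Y j i ≠ 0) :
    fbObjective f lam beta (X, Y.updateCol i 0, S) < fbObjective f lam beta (X, Y, S) := by
  have hlt : (nnzc (Y.updateCol i 0) : ℝ) < nnzc Y := by exact_mod_cast nnzc_updateCol_zero_lt hY
  simp only [fbObjective, mul_transpose_updateCol_zero hX]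
  gcongr

lemma exists_col_ne_zero_iff_of_mem_globMin {τ : ℝ≥0∞} {BS : Set (Matrix (Fin m) (Fin n) ℝ)}
    (hlam : 0 < lam)
    (hmin : (X, Y, S) ∈ globMin (fbObjective f lam beta)
      {t | t.1 ∈ colNormBall τ ∧ t.2.1 ∈ colNormBall τ ∧ t.2.2 ∈ BS}) (i : Fin d) :
    (∃ j, X j i ≠ 0) ↔ ∃ j, Y j i ≠ 0 := by
  obtain ⟨⟨hXB, hYB, hSB⟩, hopt⟩ := hmin
  constructor
  · intro hX
    by_contra! hY
    exact (fbObjective_updateCol_left_lt hlam hX hY).not_ge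
      (hopt _ ⟨updateCol_zero_mem_colNormBall hXB i, hYB, hSB⟩)
  · intro hY
    by_contra! hX
    exact (fbObjective_updateCol_right_lt hlam hX hY).not_ge
      (hopt _ ⟨hXB, updateCol_zero_mem_colNormBall hYB i, hSB⟩)

end FB

theorem stmt3_general (m n d : ℕ)
    (lam beta : ℝ)
    (f : Matrix (Fin m) (Fin n) ℝ → Matrix (Fin m) (Fin n) ℝ → ℝ)
    (BS : Set (Matrix (Fin m) (Fin n) ℝ))
    (τ : ℝ≥0∞)
    (BX : Set (Matrix (Fin m) (Fin d) ℝ))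
    (hBX : BX = {X | ∀ i, ENNReal.ofReal (colNorm X i) ≤ τ})
    (BY : Set (Matrix (Fin n) (Fin d) ℝ))
    (hBY : BY = {Y | ∀ i, ENNReal.ofReal (colNorm Y i) ≤ τ})
    (FF : Matrix (Fin m) (Fin d) ℝ × Matrix (Fin n) (Fin d) ℝ × Matrix (Fin m) (Fin n) ℝ → ℝ)
    (hFF : FF = fun t => f (t.1 * t.2.1ᵀ) t.2.2 +
      lam * ((nnzc t.1 : ℝ) + (nnzc t.2.1 : ℝ)) + beta * (l0 t.2.2 : ℝ))
    (feasFB : Set (Matrix (Fin m) (Fin d) ℝ × Matrix (Fin n) (Fin d) ℝ × Matrix (Fin m) (Fin n) ℝ))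
    (hfeasFB : feasFB = {t | t.1 ∈ BX ∧ t.2.1 ∈ BY ∧ t.2.2 ∈ BS})
    (X : Matrix (Fin m) (Fin d) ℝ) (Y : Matrix (Fin n) (Fin d) ℝ) (S : Matrix (Fin m) (Fin n) ℝ)
    (hmin : (X, Y, S) ∈ globMin FF feasFB) :
    colIdx lam X = colIdx lam Y ∧
    (0 < lam → ∀ i, (∃ j, X j i ≠ 0) ↔ (∃ j, Y j i ≠ 0)) := by
  subst hBX hBY hFF hfeasFB
  have hcols : 0 < lam → ∀ i, (∃ j, X j i ≠ 0) ↔ ∃ j, Y j i ≠ 0 := fun hlam =>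
    exists_col_ne_zero_iff_of_mem_globMin (f := f) (beta := beta) (τ := τ) (BS := BS) hlam hmin
  exact ⟨Set.ext fun i => imp_congr_right fun hlam => hcols hlam i, hcols⟩

/-- Any global minimizer `(X,Y,S)` of problem (FB) satisfies `𝕀_X = 𝕀_Y`;
in particular, when `λ > 0`, columns of `X` and `Y` vanish simultaneously. -/
theorem stmt3 (m n d : ℕ) (hm : 0 < m) (hn : 0 < n) (hd : 0 < d)
    (lam beta : ℝ) (hlam : 0 ≤ lam) (hbeta : 0 ≤ beta)
    (f : Matrix (Fin m) (Fin n) ℝ → Matrix (Fin m) (Fin n) ℝ → ℝ)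
    (hf0 : ∀ Z S, 0 ≤ f Z S)
    (hfLip : LocallyLipschitz fun p : Matrix (Fin m) (Fin n) ℝ × Matrix (Fin m) (Fin n) ℝ =>
      f p.1 p.2)
    (κ1 κ2 : Fin m → Fin n → EReal)
    (hκ1 : ∀ i j, κ1 i j ≤ 0) (hκ2 : ∀ i j, 0 ≤ κ2 i j)
    (BS : Set (Matrix (Fin m) (Fin n) ℝ))
    (hBS : BS = {S | ∀ i j, κ1 i j ≤ (S i j : EReal) ∧ (S i j : EReal) ≤ κ2 i j})
    (τ : ℝ≥0∞)
    (BX : Set (Matrix (Fin m) (Fin d) ℝ))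
    (hBX : BX = {X | ∀ i, ENNReal.ofReal (colNorm X i) ≤ τ})
    (BY : Set (Matrix (Fin n) (Fin d) ℝ))
    (hBY : BY = {Y | ∀ i, ENNReal.ofReal (colNorm Y i) ≤ τ})
    (FF : Matrix (Fin m) (Fin d) ℝ × Matrix (Fin n) (Fin d) ℝ × Matrix (Fin m) (Fin n) ℝ → ℝ)
    (hFF : FF = fun t => f (t.1 * t.2.1ᵀ) t.2.2 +
      lam * ((nnzc t.1 : ℝ) + (nnzc t.2.1 : ℝ)) + beta * (l0 t.2.2 : ℝ))
    (feasFB : Set (Matrix (Fin m) (Fin d) ℝ × Matrix (Fin n) (Fin d) ℝ × Matrix (Fin m) (Fin n) ℝ))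
    (hfeasFB : feasFB = {t | t.1 ∈ BX ∧ t.2.1 ∈ BY ∧ t.2.2 ∈ BS})
    (X : Matrix (Fin m) (Fin d) ℝ) (Y : Matrix (Fin n) (Fin d) ℝ) (S : Matrix (Fin m) (Fin n) ℝ)
    (hmin : (X, Y, S) ∈ globMin FF feasFB) :
    colIdx lam X = colIdx lam Y ∧
    (0 < lam → ∀ i, (∃ j, X j i ≠ 0) ↔ (∃ j, Y j i ≠ 0)) :=
  stmt3_general m n d lam beta f BS τ BX hBX BY hBY FF hFF feasFB hfeasFB X Y S hmin
end
end

section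
/- Suppose the minimum of problem (FR) is attained (𝒢_(FR) ≠ ∅) and every global minimizer of (FR) satisfies property (C2). Then 𝒢_(FB) = 𝒢_(FR) and V_(FB) = V_(FR). -/
open Matrix Set
open scoped ENNReal

attribute [local instance] Matrix.frobeniusNormedAddCommGroup

noncomputable section

/-- property (C2) for a triple `(X, Y, S)` with parameters `r, s`. -/
def propC2 {m n d : ℕ} (lam beta r s : ℝ)
    (t : Matrix (Fin m) (Fin d) ℝ × Matrix (Fin n) (Fin d) ℝ × Matrix (Fin m) (Fin n) ℝ) : Prop :=
  (0 < lam → ∀ i, colNorm t.1 i ∉ Set.Ioo 0 r ∧ colNorm t.2.1 i ∉ Set.Ioo 0 r) ∧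
  (0 < beta → ∀ i j, |t.2.2 i j| ∉ Set.Ioo 0 s)

/-!
The relaxed penalties never exceed the combinatorial ones: each summand `θ (x / r)` is `0` at
`x = 0` and at most `1` otherwise. They coincide at points satisfying (C2), where every
nonzero column norm or entry is at least the threshold, so `θ` takes the value `1` there. Hence
`F_θ ≤ F` everywhere with equality on the minimizers of `F_θ`, and a minimizer `t₀` of `F_θ` gives
`F t₀ = F_θ t₀ ≤ F_θ ≤ F`.
-/

lemma globMin_eq_of_le_of_eq_on_globMin {α : Type*} {g G : α → ℝ} {s : Set α}
    (hle : ∀ a ∈ s, g a ≤ G a) (heq : ∀ a ∈ globMin g s, G a = g a)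
    (hne : (globMin g s).Nonempty) :
    globMin G s = globMin g s := by
  obtain ⟨a₀, ha₀s, ha₀min⟩ := hne
  refine Set.Subset.antisymm (fun a ⟨has, hamin⟩ => ⟨has, fun b hb => ?_⟩)
    (fun a ha => ⟨ha.1, fun b hb => ?_⟩)
  · calc g a ≤ G a := hle a has
      _ ≤ G a₀ := hamin a₀ ha₀s
      _ = g a₀ := heq a₀ ⟨ha₀s, ha₀min⟩
      _ ≤ g b := ha₀min b hb
  · calc G a = g a := heq a ha
      _ ≤ g b := ha.2 b hb
      _ ≤ G b := hle b hb

lemma optVal_eq_of_mem_globMin {α : Type*} {g : α → ℝ} {s : Set α} {a : α}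
    (ha : a ∈ globMin g s) : optVal g s = g a :=
  IsLeast.csInf_eq ⟨⟨a, ha.1, rfl⟩, by rintro _ ⟨b, hb, rfl⟩; exact ha.2 b hb⟩

lemma optVal_eq_of_le_of_eq_on_globMin {α : Type*} {g G : α → ℝ} {s : Set α}
    (hle : ∀ a ∈ s, g a ≤ G a) (heq : ∀ a ∈ globMin g s, G a = g a)
    (hne : (globMin g s).Nonempty) :
    optVal G s = optVal g s := by
  obtain ⟨a₀, ha₀⟩ := hne
  have ha₀G : a₀ ∈ globMin G s := globMin_eq_of_le_of_eq_on_globMin hle heq ⟨a₀, ha₀⟩ ▸ ha₀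
  rw [optVal_eq_of_mem_globMin ha₀, optVal_eq_of_mem_globMin ha₀G, heq a₀ ha₀]

lemma ncard_support_eq_sum {ι : Type*} [Fintype ι] (g : ι → ℝ) :
    ((Function.support g).ncard : ℝ) = ∑ i, if g i ≠ 0 then 1 else 0 := by
  classical
  rw [Set.ncard_eq_toFinset_card', Function.support, Set.toFinset_ofPred, Finset.natCast_card_filter]

section Relaxation

variable {θ : ℝ → ℝ} {r : ℝ}

lemma apply_le_one_of_nonneg (hθ0 : θ 0 = 0) (hθ01 : ∀ t, 0 < t → t < 1 → θ t ≤ 1)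
    (hθ1 : ∀ t, 1 ≤ t → θ t = 1) {x : ℝ} (hx : 0 ≤ x) : θ x ≤ 1 := by
  rcases hx.eq_or_lt with rfl | hx
  · simp [hθ0]
  rcases lt_or_ge x 1 with hx1 | hx1
  · exact hθ01 x hx hx1
  · exact (hθ1 x hx1).le

lemma sum_div_le_ncard_support {ι : Type*} [Fintype ι] (hθ0 : θ 0 = 0)
    (hθle : ∀ x, 0 ≤ x → θ x ≤ 1) (hr : 0 ≤ r) (g : ι → ℝ) (hg : ∀ i, 0 ≤ g i) :
    ∑ i, θ (g i / r) ≤ ((Function.support g).ncard : ℝ) := by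
  rw [ncard_support_eq_sum]
  refine Finset.sum_le_sum fun i _ => ?_
  split_ifs with hgi
  · exact hθle _ (div_nonneg (hg i) hr)
  · simp [not_not.mp hgi, hθ0]

lemma sum_div_eq_ncard_support {ι : Type*} [Fintype ι] (hθ0 : θ 0 = 0)
    (hθ1 : ∀ t, 1 ≤ t → θ t = 1) (hr : 0 < r) (g : ι → ℝ) (hg : ∀ i, 0 ≤ g i)
    (hgap : ∀ i, g i ∉ Set.Ioo 0 r) :
    ∑ i, θ (g i / r) = ((Function.support g).ncard : ℝ) := by
  rw [ncard_support_eq_sum]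
  refine Finset.sum_congr rfl fun i _ => ?_
  split_ifs with hgi
  · have hrg : r ≤ g i := not_lt.mp fun hlt => hgap i ⟨(hg i).lt_of_ne' hgi, hlt⟩
    exact hθ1 _ ((one_le_div hr).mpr hrg)
  · simp [not_not.mp hgi, hθ0]

end Relaxation

lemma colNorm_eq_zero_iff {m d : ℕ} (X : Matrix (Fin m) (Fin d) ℝ) (i : Fin d) :
    colNorm X i = 0 ↔ ∀ j, X j i = 0 := by
  rw [colNorm, Real.sqrt_eq_zero (by positivity),
    Finset.sum_eq_zero_iff_of_nonneg fun j _ => sq_nonneg _]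
  simp

lemma nnzc_eq_ncard_support_colNorm {m d : ℕ} (X : Matrix (Fin m) (Fin d) ℝ) :
    nnzc X = (Function.support (colNorm X)).ncard := by
  simp only [nnzc, Function.support, ne_eq, colNorm_eq_zero_iff, not_forall]

lemma l0_eq_ncard_support_abs {m n : ℕ} (S : Matrix (Fin m) (Fin n) ℝ) :
    l0 S = (Function.support fun p : Fin m × Fin n => |S p.1 p.2|).ncard := by
  simp only [l0, Function.support, ne_eq, abs_eq_zero]

section Penalties

variable {m n d : ℕ} {θ : ℝ → ℝ} {r : ℝ}

lemma sum_colNorm_le_nnzc (hθ0 : θ 0 = 0) (hθle : ∀ x, 0 ≤ x → θ x ≤ 1) (hr : 0 ≤ r)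
    (X : Matrix (Fin m) (Fin d) ℝ) :
    ∑ i, θ (colNorm X i / r) ≤ nnzc X := by
  rw [nnzc_eq_ncard_support_colNorm]
  exact sum_div_le_ncard_support hθ0 hθle hr _ fun i => Real.sqrt_nonneg _

lemma sum_colNorm_eq_nnzc (hθ0 : θ 0 = 0) (hθ1 : ∀ t, 1 ≤ t → θ t = 1) (hr : 0 < r)
    (X : Matrix (Fin m) (Fin d) ℝ) (hX : ∀ i, colNorm X i ∉ Set.Ioo 0 r) :
    ∑ i, θ (colNorm X i / r) = nnzc X := by
  rw [nnzc_eq_ncard_support_colNorm]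
  exact sum_div_eq_ncard_support hθ0 hθ1 hr _ (fun i => Real.sqrt_nonneg _) hX

lemma sum_abs_le_l0 (hθ0 : θ 0 = 0) (hθle : ∀ x, 0 ≤ x → θ x ≤ 1) (hr : 0 ≤ r)
    (S : Matrix (Fin m) (Fin n) ℝ) :
    ∑ i, ∑ j, θ (|S i j| / r) ≤ l0 S := by
  rw [l0_eq_ncard_support_abs, ← Fintype.sum_prod_type']
  exact sum_div_le_ncard_support hθ0 hθle hr (fun p : Fin m × Fin n => |S p.1 p.2|) fun p => abs_nonneg _

lemma sum_abs_eq_l0 (hθ0 : θ 0 = 0) (hθ1 : ∀ t, 1 ≤ t → θ t = 1) (hr : 0 < r)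
    (S : Matrix (Fin m) (Fin n) ℝ) (hS : ∀ i j, |S i j| ∉ Set.Ioo 0 r) :
    ∑ i, ∑ j, θ (|S i j| / r) = l0 S := by
  rw [l0_eq_ncard_support_abs, ← Fintype.sum_prod_type']
  exact sum_div_eq_ncard_support hθ0 hθ1 hr (fun p : Fin m × Fin n => |S p.1 p.2|) (fun p => abs_nonneg _)
    fun p => hS p.1 p.2

end Penalties

lemma mul_eq_mul_left_of_pos_imp {c a b : ℝ} (hc : 0 ≤ c) (h : 0 < c → a = b) :
    c * a = c * b := by
  rcases hc.eq_or_lt with rfl | hc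
  · simp
  · rw [h hc]

theorem stmt6_general (m n d : ℕ)
    (lam beta : ℝ) (hlam : 0 ≤ lam) (hbeta : 0 ≤ beta)
    (f : Matrix (Fin m) (Fin n) ℝ → Matrix (Fin m) (Fin n) ℝ → ℝ)
    (feasFB : Set (Matrix (Fin m) (Fin d) ℝ × Matrix (Fin n) (Fin d) ℝ × Matrix (Fin m) (Fin n) ℝ))
    (FF : Matrix (Fin m) (Fin d) ℝ × Matrix (Fin n) (Fin d) ℝ × Matrix (Fin m) (Fin n) ℝ → ℝ)
    (hFF : FF = fun t => f (t.1 * t.2.1ᵀ) t.2.2 +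
      lam * ((nnzc t.1 : ℝ) + (nnzc t.2.1 : ℝ)) + beta * (l0 t.2.2 : ℝ))
    -- the relaxation function θ
    (θ : ℝ → ℝ) (hθ0 : θ 0 = 0)
    (hθ01 : ∀ t, 0 < t → t < 1 → θ t ≤ 1) (hθ1 : ∀ t, 1 ≤ t → θ t = 1)
    -- parameters r, s > 0 and the relaxed objective
    (r s : ℝ) (hr : 0 < r) (hs : 0 < s)
    (FR : Matrix (Fin m) (Fin d) ℝ × Matrix (Fin n) (Fin d) ℝ × Matrix (Fin m) (Fin n) ℝ → ℝ)
    (hFR : FR = fun t => f (t.1 * t.2.1ᵀ) t.2.2 +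
      lam * ((∑ i, θ (colNorm t.1 i / r)) + ∑ i, θ (colNorm t.2.1 i / r)) +
      beta * ∑ i, ∑ j, θ (|t.2.2 i j| / s))
    -- the minimum of (FR) is attained and every global minimizer of (FR) satisfies (C2)
    (hne : (globMin FR feasFB).Nonempty)
    (hC2 : ∀ t ∈ globMin FR feasFB, propC2 lam beta r s t) :
    globMin FF feasFB = globMin FR feasFB ∧ optVal FF feasFB = optVal FR feasFB := by
  have hθle : ∀ x, 0 ≤ x → θ x ≤ 1 := fun x => apply_le_one_of_nonneg hθ0 hθ01 hθ1
  have hle : ∀ t ∈ feasFB, FR t ≤ FF t := fun t _ => by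
    rw [hFF, hFR]
    dsimp only
    gcongr
    · exact sum_colNorm_le_nnzc hθ0 hθle hr.le t.1
    · exact sum_colNorm_le_nnzc hθ0 hθle hr.le t.2.1
    · exact sum_abs_le_l0 hθ0 hθle hs.le t.2.2
  have heq : ∀ t ∈ globMin FR feasFB, FF t = FR t := fun t ht => by
    obtain ⟨hcol, habs⟩ := hC2 t ht
    rw [hFF, hFR]
    refine congrArg₂ (· + ·) (congrArg₂ (· + ·) rfl ?_) ?_
    · refine mul_eq_mul_left_of_pos_imp hlam fun h => ?_
      rw [sum_colNorm_eq_nnzc hθ0 hθ1 hr t.1 fun i => (hcol h i).1,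
        sum_colNorm_eq_nnzc hθ0 hθ1 hr t.2.1 fun i => (hcol h i).2]
    · exact mul_eq_mul_left_of_pos_imp hbeta fun h =>
        (sum_abs_eq_l0 hθ0 hθ1 hs t.2.2 (habs h)).symm
  exact ⟨globMin_eq_of_le_of_eq_on_globMin hle heq hne,
    optVal_eq_of_le_of_eq_on_globMin hle heq hne⟩

/-- If the minimum of (FR) is attained and every global minimizer of (FR) satisfies
property (C2), then `𝒢_(FB) = 𝒢_(FR)` and `V_(FB) = V_(FR)`. -/
theorem stmt6 (m n d : ℕ) (hm : 0 < m) (hn : 0 < n) (hd : 0 < d)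
    (lam beta : ℝ) (hlam : 0 ≤ lam) (hbeta : 0 ≤ beta)
    (f : Matrix (Fin m) (Fin n) ℝ → Matrix (Fin m) (Fin n) ℝ → ℝ)
    (hf0 : ∀ Z S, 0 ≤ f Z S)
    (hfLip : LocallyLipschitz fun p : Matrix (Fin m) (Fin n) ℝ × Matrix (Fin m) (Fin n) ℝ =>
      f p.1 p.2)
    (κ1 κ2 : Fin m → Fin n → EReal)
    (hκ1 : ∀ i j, κ1 i j ≤ 0) (hκ2 : ∀ i j, 0 ≤ κ2 i j)
    (BS : Set (Matrix (Fin m) (Fin n) ℝ))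
    (hBS : BS = {S | ∀ i j, κ1 i j ≤ (S i j : EReal) ∧ (S i j : EReal) ≤ κ2 i j})
    (τ : ℝ≥0∞)
    (BX : Set (Matrix (Fin m) (Fin d) ℝ))
    (hBX : BX = {X | ∀ i, ENNReal.ofReal (colNorm X i) ≤ τ})
    (BY : Set (Matrix (Fin n) (Fin d) ℝ))
    (hBY : BY = {Y | ∀ i, ENNReal.ofReal (colNorm Y i) ≤ τ})
    (feasFB : Set (Matrix (Fin m) (Fin d) ℝ × Matrix (Fin n) (Fin d) ℝ × Matrix (Fin m) (Fin n) ℝ))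
    (hfeasFB : feasFB = {t | t.1 ∈ BX ∧ t.2.1 ∈ BY ∧ t.2.2 ∈ BS})
    (FF : Matrix (Fin m) (Fin d) ℝ × Matrix (Fin n) (Fin d) ℝ × Matrix (Fin m) (Fin n) ℝ → ℝ)
    (hFF : FF = fun t => f (t.1 * t.2.1ᵀ) t.2.2 +
      lam * ((nnzc t.1 : ℝ) + (nnzc t.2.1 : ℝ)) + beta * (l0 t.2.2 : ℝ))
    -- the relaxation function θ
    (θ : ℝ → ℝ) (hθ0 : θ 0 = 0) (hθnn : ∀ t, 0 ≤ t → 0 ≤ θ t)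
    (hθ01 : ∀ t, 0 < t → t < 1 → θ t ≤ 1) (hθ1 : ∀ t, 1 ≤ t → θ t = 1)
    -- parameters r, s > 0 and the relaxed objective
    (r s : ℝ) (hr : 0 < r) (hs : 0 < s)
    (FR : Matrix (Fin m) (Fin d) ℝ × Matrix (Fin n) (Fin d) ℝ × Matrix (Fin m) (Fin n) ℝ → ℝ)
    (hFR : FR = fun t => f (t.1 * t.2.1ᵀ) t.2.2 +
      lam * ((∑ i, θ (colNorm t.1 i / r)) + ∑ i, θ (colNorm t.2.1 i / r)) +
      beta * ∑ i, ∑ j, θ (|t.2.2 i j| / s))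
    -- the minimum of (FR) is attained and every global minimizer of (FR) satisfies (C2)
    (hne : (globMin FR feasFB).Nonempty)
    (hC2 : ∀ t ∈ globMin FR feasFB, propC2 lam beta r s t) :
    globMin FF feasFB = globMin FR feasFB ∧ optVal FF feasFB = optVal FR feasFB :=
  stmt6_general m n d lam beta hlam hbeta f feasFB FF hFF θ hθ0 hθ01 hθ1 r s hr hs FR hFR hne hC2
end
end

section
/- Assume the block Lipschitz condition holds, let η > 0 satisfy θ(t) ≥ η·t for all t ∈ (0,1), and assume: if λ > 0 then 0 < r < min{τ, λη/max{L_X, L_Y}}, and if β > 0 then 0 < s < βη/L_S. Then every global minimizer (X,Y,S) of problem (FR) satisfies property (C2): when λ > 0, ‖X_i‖₂ ∉ (0,r) and ‖Y_i‖₂ ∉ (0,r) for every i, and when β > 0, |S_{ij}| ∉ (0,s) for every (i,j). -/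
/-!
Zeroing a single column of `X` or `Y`, or a single entry of `S`, keeps a point of `𝓑` feasible.
If that block has size `x ∈ (0, r)`, zeroing it lowers the penalty by `λ θ(x/r) ≥ λ η x / r`,
while the block Lipschitz condition lets `f` grow by at most `L x`. As `r L < λ η`, the
objective strictly decreases, so a global minimizer has no such block.
-/

open Matrix Set
open scoped ENNReal

attribute [local instance] Matrix.frobeniusNormedAddCommGroup

noncomputable section

theorem sum_comp_update_zero {ι α M : Type*} [Fintype ι] [DecidableEq ι] [Zero α]
    [AddCommMonoid M] (φ : α → M) (hφ : φ 0 = 0) (g : ι → α) (k : ι) :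
    ∑ i, φ (g i) = ∑ i, φ (Function.update g k 0 i) + φ (g k) := by
  simp only [Function.apply_update (fun _ => φ), hφ, Finset.sum_update_of_mem (Finset.mem_univ k),
    zero_add]
  rw [Fintype.sum_eq_add_sum_compl k, add_comm, Finset.compl_eq_univ_sdiff]

namespace Matrix

variable {ι κ α : Type*} [DecidableEq ι] [DecidableEq κ]

def updateEntry (S : Matrix ι κ α) (i : ι) (j : κ) (c : α) : Matrix ι κ α :=
  of fun a b => Function.update (Function.uncurry S) (i, j) c (a, b)

@[simp]
theorem updateEntry_self (S : Matrix ι κ α) (i : ι) (j : κ) (c : α) :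
    S.updateEntry i j c i j = c :=
  Function.update_self (β := fun _ => α) (i, j) c (Function.uncurry S)

theorem updateEntry_of_ne {S : Matrix ι κ α} {i a : ι} {j b : κ} (h : (a, b) ≠ (i, j)) (c : α) :
    S.updateEntry i j c a b = S a b :=
  Function.update_of_ne (β := fun _ => α) h c (Function.uncurry S)

theorem sum_sum_comp_updateEntry_zero [Fintype ι] [Fintype κ] [Zero α] {M : Type*}
    [AddCommMonoid M] (φ : α → M) (hφ : φ 0 = 0) (S : Matrix ι κ α) (i : ι) (j : κ) :
    ∑ a, ∑ b, φ (S a b) = ∑ a, ∑ b, φ (S.updateEntry i j 0 a b) + φ (S i j) := by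
  simp only [updateEntry, of_apply, ← Fintype.sum_prod_type']
  exact sum_comp_update_zero φ hφ (Function.uncurry S) (i, j)

theorem updateEntry_zero_mem_box {κ1 κ2 : ι → κ → EReal} (hκ1 : ∀ i j, κ1 i j ≤ 0)
    (hκ2 : ∀ i j, 0 ≤ κ2 i j) {S : Matrix ι κ ℝ}
    (hS : ∀ a b, κ1 a b ≤ (S a b : EReal) ∧ (S a b : EReal) ≤ κ2 a b) (i : ι) (j : κ) (a : ι)
    (b : κ) :
    κ1 a b ≤ (S.updateEntry i j 0 a b : EReal) ∧ (S.updateEntry i j 0 a b : EReal) ≤ κ2 a b := by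
  rcases eq_or_ne (a, b) (i, j) with h | h
  · obtain ⟨rfl, rfl⟩ := Prod.ext_iff.1 h
    simpa using ⟨hκ1 a b, hκ2 a b⟩
  · rw [updateEntry_of_ne h]
    exact hS a b

end Matrix

theorem colNorm_updateCol_zero {p d : ℕ} (X : Matrix (Fin p) (Fin d) ℝ) (k : Fin d) :
    colNorm (X.updateCol k 0) = Function.update (colNorm X) k 0 := by
  funext i
  rcases eq_or_ne i k with rfl | hi
  · simp [colNorm]
  · simp [colNorm, hi]

theorem colNorm_sub_updateCol_zero {p d : ℕ} (X : Matrix (Fin p) (Fin d) ℝ) (k : Fin d) :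
    colNorm (X - X.updateCol k 0) k = colNorm X k := by
  simp [colNorm]

theorem sum_comp_colNorm_updateCol_zero {p d : ℕ} (φ : ℝ → ℝ) (hφ : φ 0 = 0)
    (X : Matrix (Fin p) (Fin d) ℝ) (k : Fin d) :
    ∑ i, φ (colNorm X i) = ∑ i, φ (colNorm (X.updateCol k 0) i) + φ (colNorm X k) := by
  rw [colNorm_updateCol_zero]
  exact sum_comp_update_zero φ hφ (colNorm X) k

theorem ofReal_colNorm_updateCol_zero_le {p d : ℕ} {τ : ℝ≥0∞} {X : Matrix (Fin p) (Fin d) ℝ}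
    (hX : ∀ i, ENNReal.ofReal (colNorm X i) ≤ τ) (k : Fin d) :
    ∀ i, ENNReal.ofReal (colNorm (X.updateCol k 0) i) ≤ τ := by
  intro i
  rw [colNorm_updateCol_zero]
  rcases eq_or_ne i k with rfl | hi
  · simp
  · simpa [hi] using hX i

theorem mul_lt_of_lt_div_of_pos {a b r : ℝ} (ha : 0 < a) (hr : 0 < r) (h : r < a / b) :
    r * b < a := by
  have hb : 0 < b := ((div_pos_iff.1 (hr.trans h)).resolve_right fun h' => ha.not_gt h'.1).2
  exact (lt_div_iff₀ hb).1 h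

section Penalty

variable {θ : ℝ → ℝ} {η c L r : ℝ}

theorem notMem_Ioo_of_penalty_le_lipschitz {x fa fb : ℝ}
    (hθη : ∀ t, 0 < t → t < 1 → η * t ≤ θ t) (hc : 0 ≤ c) (hrL : r * L < c * η)
    (hgain : c * θ (x / r) ≤ fb - fa) (hLip : |fa - fb| ≤ L * x) : x ∉ Ioo 0 r := by
  rintro ⟨hx, hxr⟩
  have hr : 0 < r := hx.trans hxr
  have hθx := hθη (x / r) (div_pos hx hr) ((div_lt_one hr).2 hxr)
  have hfb : fb - fa ≤ L * x := (neg_le_abs (fa - fb)).trans' (by linarith) |>.trans hLip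
  have : L * x * r < L * x * r :=
    calc L * x * r = r * L * x := by ring
      _ < c * η * x := by gcongr
      _ = c * (η * (x / r)) * r := by field_simp
      _ ≤ c * θ (x / r) * r := by gcongr
      _ ≤ L * x * r := mul_le_mul_of_nonneg_right (hgain.trans hfb) hr.le
  exact lt_irrefl _ this

theorem colNorm_notMem_Ioo_of_le_updateCol_zero {p d : ℕ} (Φ : Matrix (Fin p) (Fin d) ℝ → ℝ)
    (X : Matrix (Fin p) (Fin d) ℝ) (k : Fin d) (hθ0 : θ 0 = 0)
    (hθη : ∀ t, 0 < t → t < 1 → η * t ≤ θ t) (hc : 0 ≤ c) (hrL : r * L < c * η)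
    (hmin : Φ X + c * ∑ i, θ (colNorm X i / r) ≤
      Φ (X.updateCol k 0) + c * ∑ i, θ (colNorm (X.updateCol k 0) i / r))
    (hLip : |Φ X - Φ (X.updateCol k 0)| ≤ L * colNorm X k) : colNorm X k ∉ Ioo 0 r := by
  rw [sum_comp_colNorm_updateCol_zero (fun x => θ (x / r)) (by simp [hθ0]) X k] at hmin
  exact notMem_Ioo_of_penalty_le_lipschitz hθη hc hrL (by linarith) hLip

theorem abs_notMem_Ioo_of_le_updateEntry_zero {ι κ : Type*} [Fintype ι] [Fintype κ]
    [DecidableEq ι] [DecidableEq κ] (Φ : Matrix ι κ ℝ → ℝ) (S : Matrix ι κ ℝ) (i : ι) (j : κ)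
    (hθ0 : θ 0 = 0) (hθη : ∀ t, 0 < t → t < 1 → η * t ≤ θ t) (hc : 0 ≤ c)
    (hrL : r * L < c * η)
    (hmin : Φ S + c * ∑ a, ∑ b, θ (|S a b| / r) ≤
      Φ (S.updateEntry i j 0) + c * ∑ a, ∑ b, θ (|S.updateEntry i j 0 a b| / r))
    (hLip : |Φ S - Φ (S.updateEntry i j 0)| ≤ L * |S i j|) : |S i j| ∉ Ioo 0 r := by
  rw [S.sum_sum_comp_updateEntry_zero (fun x => θ (|x| / r)) (by simp [hθ0]) i j] at hmin
  exact notMem_Ioo_of_penalty_le_lipschitz hθη hc hrL (by linarith) hLip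

end Penalty

theorem stmt8_general (m n d : ℕ)
    (lam beta : ℝ)
    (f : Matrix (Fin m) (Fin n) ℝ → Matrix (Fin m) (Fin n) ℝ → ℝ)
    (κ1 κ2 : Fin m → Fin n → EReal)
    (hκ1 : ∀ i j, κ1 i j ≤ 0) (hκ2 : ∀ i j, 0 ≤ κ2 i j)
    (BS : Set (Matrix (Fin m) (Fin n) ℝ))
    (hBS : BS = {S | ∀ i j, κ1 i j ≤ (S i j : EReal) ∧ (S i j : EReal) ≤ κ2 i j})
    (τ : ℝ≥0∞)
    (BX : Set (Matrix (Fin m) (Fin d) ℝ))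
    (hBX : BX = {X | ∀ i, ENNReal.ofReal (colNorm X i) ≤ τ})
    (BY : Set (Matrix (Fin n) (Fin d) ℝ))
    (hBY : BY = {Y | ∀ i, ENNReal.ofReal (colNorm Y i) ≤ τ})
    (feasFB : Set (Matrix (Fin m) (Fin d) ℝ × Matrix (Fin n) (Fin d) ℝ × Matrix (Fin m) (Fin n) ℝ))
    (hfeasFB : feasFB = {t | t.1 ∈ BX ∧ t.2.1 ∈ BY ∧ t.2.2 ∈ BS})
    -- the relaxation function θ
    (θ : ℝ → ℝ) (hθ0 : θ 0 = 0)
    -- block Lipschitz condition on f over 𝓑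
    (LX LY LS : ℝ)
    (hLipX : 0 < lam → ∀ (X X' : Matrix (Fin m) (Fin d) ℝ) (Y : Matrix (Fin n) (Fin d) ℝ)
      (S : Matrix (Fin m) (Fin n) ℝ) (k : Fin d), (X, Y, S) ∈ feasFB → (X', Y, S) ∈ feasFB →
      (∀ i, i ≠ k → ∀ j, X j i = X' j i) →
      |f (X * Yᵀ) S - f (X' * Yᵀ) S| ≤ LX * colNorm (X - X') k)
    (hLipY : 0 < lam → ∀ (X : Matrix (Fin m) (Fin d) ℝ) (Y Y' : Matrix (Fin n) (Fin d) ℝ)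
      (S : Matrix (Fin m) (Fin n) ℝ) (k : Fin d), (X, Y, S) ∈ feasFB → (X, Y', S) ∈ feasFB →
      (∀ i, i ≠ k → ∀ j, Y j i = Y' j i) →
      |f (X * Yᵀ) S - f (X * Y'ᵀ) S| ≤ LY * colNorm (Y - Y') k)
    (hLipS : 0 < beta → ∀ (X : Matrix (Fin m) (Fin d) ℝ) (Y : Matrix (Fin n) (Fin d) ℝ)
      (S S' : Matrix (Fin m) (Fin n) ℝ) (i : Fin m) (j : Fin n),
      (X, Y, S) ∈ feasFB → (X, Y, S') ∈ feasFB →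
      (∀ i' j', (i', j') ≠ (i, j) → S i' j' = S' i' j') →
      |f (X * Yᵀ) S - f (X * Yᵀ) S'| ≤ LS * |S i j - S' i j|)
    -- η > 0 with θ(t) ≥ η·t on (0,1)
    (η : ℝ) (hη : 0 < η) (hθη : ∀ t, 0 < t → t < 1 → η * t ≤ θ t)
    -- parameters r, s and the bounds on them
    (r s : ℝ)
    (hrpos : 0 < lam → 0 < r)
    (hrb : 0 < lam → r < lam * η / max LX LY)
    (hspos : 0 < beta → 0 < s)
    (hsb : 0 < beta → s < beta * η / LS)
    -- the relaxed objective
    (FR : Matrix (Fin m) (Fin d) ℝ × Matrix (Fin n) (Fin d) ℝ × Matrix (Fin m) (Fin n) ℝ → ℝ)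
    (hFR : FR = fun t => f (t.1 * t.2.1ᵀ) t.2.2 +
      lam * ((∑ i, θ (colNorm t.1 i / r)) + ∑ i, θ (colNorm t.2.1 i / r)) +
      beta * ∑ i, ∑ j, θ (|t.2.2 i j| / s)) :
    ∀ t ∈ globMin FR feasFB, propC2 lam beta r s t := by
  subst hBS hBX hBY hfeasFB hFR
  rintro ⟨X, Y, S⟩ ⟨hfeas, hmin⟩
  obtain ⟨hX, hY, hS⟩ := hfeas
  have hrmax (hlam : 0 < lam) : r * max LX LY < lam * η :=
    mul_lt_of_lt_div_of_pos (mul_pos hlam hη) (hrpos hlam) (hrb hlam)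
  refine ⟨fun hlam k => ⟨?_, ?_⟩, fun hbeta i j => ?_⟩
  · have hX' := ofReal_colNorm_updateCol_zero_le hX k
    have hle := hmin (X.updateCol k 0, Y, S) ⟨hX', hY, hS⟩
    have hLip := hLipX hlam X (X.updateCol k 0) Y S k ⟨hX, hY, hS⟩ ⟨hX', hY, hS⟩
      fun i hi j => (updateCol_ne hi).symm
    dsimp only at hle
    rw [colNorm_sub_updateCol_zero] at hLip
    exact colNorm_notMem_Ioo_of_le_updateCol_zero (fun X' => f (X' * Yᵀ) S) X k hθ0 hθη hlam.le
      ((mul_le_mul_of_nonneg_left (le_max_left _ _) (hrpos hlam).le).trans_lt (hrmax hlam))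
      (by linarith) hLip
  · have hY' := ofReal_colNorm_updateCol_zero_le hY k
    have hle := hmin (X, Y.updateCol k 0, S) ⟨hX, hY', hS⟩
    have hLip := hLipY hlam X Y (Y.updateCol k 0) S k ⟨hX, hY, hS⟩ ⟨hX, hY', hS⟩
      fun i hi j => (updateCol_ne hi).symm
    dsimp only at hle
    rw [colNorm_sub_updateCol_zero] at hLip
    exact colNorm_notMem_Ioo_of_le_updateCol_zero (fun Y' => f (X * Y'ᵀ) S) Y k hθ0 hθη hlam.le
      ((mul_le_mul_of_nonneg_left (le_max_right _ _) (hrpos hlam).le).trans_lt (hrmax hlam))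
      (by linarith) hLip
  · have hS' := updateEntry_zero_mem_box hκ1 hκ2 hS i j
    have hle := hmin (X, Y, S.updateEntry i j 0) ⟨hX, hY, hS'⟩
    have hLip := hLipS hbeta X Y S (S.updateEntry i j 0) i j ⟨hX, hY, hS⟩ ⟨hX, hY, hS'⟩
      fun a b h => (updateEntry_of_ne h 0).symm
    dsimp only at hle
    rw [updateEntry_self, sub_zero] at hLip
    exact abs_notMem_Ioo_of_le_updateEntry_zero (fun S' => f (X * Yᵀ) S') S i j hθ0 hθη hbeta.le
      (mul_lt_of_lt_div_of_pos (mul_pos hbeta hη) (hspos hbeta) (hsb hbeta)) (by linarith) hLip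

/-- Under the block Lipschitz condition and the stated bounds on `r` and `s`,
every global minimizer of problem (FR) satisfies property (C2). -/
theorem stmt8 (m n d : ℕ) (hm : 0 < m) (hn : 0 < n) (hd : 0 < d)
    (lam beta : ℝ) (hlam : 0 ≤ lam) (hbeta : 0 ≤ beta)
    (f : Matrix (Fin m) (Fin n) ℝ → Matrix (Fin m) (Fin n) ℝ → ℝ)
    (hf0 : ∀ Z S, 0 ≤ f Z S)
    (hfLip : LocallyLipschitz fun p : Matrix (Fin m) (Fin n) ℝ × Matrix (Fin m) (Fin n) ℝ =>
      f p.1 p.2)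
    (κ1 κ2 : Fin m → Fin n → EReal)
    (hκ1 : ∀ i j, κ1 i j ≤ 0) (hκ2 : ∀ i j, 0 ≤ κ2 i j)
    (BS : Set (Matrix (Fin m) (Fin n) ℝ))
    (hBS : BS = {S | ∀ i j, κ1 i j ≤ (S i j : EReal) ∧ (S i j : EReal) ≤ κ2 i j})
    (τ : ℝ≥0∞)
    (BX : Set (Matrix (Fin m) (Fin d) ℝ))
    (hBX : BX = {X | ∀ i, ENNReal.ofReal (colNorm X i) ≤ τ})
    (BY : Set (Matrix (Fin n) (Fin d) ℝ))
    (hBY : BY = {Y | ∀ i, ENNReal.ofReal (colNorm Y i) ≤ τ})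
    (feasFB : Set (Matrix (Fin m) (Fin d) ℝ × Matrix (Fin n) (Fin d) ℝ × Matrix (Fin m) (Fin n) ℝ))
    (hfeasFB : feasFB = {t | t.1 ∈ BX ∧ t.2.1 ∈ BY ∧ t.2.2 ∈ BS})
    -- the relaxation function θ
    (θ : ℝ → ℝ) (hθ0 : θ 0 = 0) (hθnn : ∀ t, 0 ≤ t → 0 ≤ θ t)
    (hθ01 : ∀ t, 0 < t → t < 1 → θ t ≤ 1) (hθ1 : ∀ t, 1 ≤ t → θ t = 1)
    -- block Lipschitz condition on f over 𝓑
    (LX LY LS : ℝ) (hLX : 0 < LX) (hLY : 0 < LY) (hLS : 0 < LS)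
    (hLipX : 0 < lam → ∀ (X X' : Matrix (Fin m) (Fin d) ℝ) (Y : Matrix (Fin n) (Fin d) ℝ)
      (S : Matrix (Fin m) (Fin n) ℝ) (k : Fin d), (X, Y, S) ∈ feasFB → (X', Y, S) ∈ feasFB →
      (∀ i, i ≠ k → ∀ j, X j i = X' j i) →
      |f (X * Yᵀ) S - f (X' * Yᵀ) S| ≤ LX * colNorm (X - X') k)
    (hLipY : 0 < lam → ∀ (X : Matrix (Fin m) (Fin d) ℝ) (Y Y' : Matrix (Fin n) (Fin d) ℝ)
      (S : Matrix (Fin m) (Fin n) ℝ) (k : Fin d), (X, Y, S) ∈ feasFB → (X, Y', S) ∈ feasFB →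
      (∀ i, i ≠ k → ∀ j, Y j i = Y' j i) →
      |f (X * Yᵀ) S - f (X * Y'ᵀ) S| ≤ LY * colNorm (Y - Y') k)
    (hLipS : 0 < beta → ∀ (X : Matrix (Fin m) (Fin d) ℝ) (Y : Matrix (Fin n) (Fin d) ℝ)
      (S S' : Matrix (Fin m) (Fin n) ℝ) (i : Fin m) (j : Fin n),
      (X, Y, S) ∈ feasFB → (X, Y, S') ∈ feasFB →
      (∀ i' j', (i', j') ≠ (i, j) → S i' j' = S' i' j') →
      |f (X * Yᵀ) S - f (X * Yᵀ) S'| ≤ LS * |S i j - S' i j|)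
    -- η > 0 with θ(t) ≥ η·t on (0,1)
    (η : ℝ) (hη : 0 < η) (hθη : ∀ t, 0 < t → t < 1 → η * t ≤ θ t)
    -- parameters r, s and the bounds on them
    (r s : ℝ)
    (hrpos : 0 < lam → 0 < r)
    (hrτ : 0 < lam → ENNReal.ofReal r < τ)
    (hrb : 0 < lam → r < lam * η / max LX LY)
    (hspos : 0 < beta → 0 < s)
    (hsb : 0 < beta → s < beta * η / LS)
    -- the relaxed objective
    (FR : Matrix (Fin m) (Fin d) ℝ × Matrix (Fin n) (Fin d) ℝ × Matrix (Fin m) (Fin n) ℝ → ℝ)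
    (hFR : FR = fun t => f (t.1 * t.2.1ᵀ) t.2.2 +
      lam * ((∑ i, θ (colNorm t.1 i / r)) + ∑ i, θ (colNorm t.2.1 i / r)) +
      beta * ∑ i, ∑ j, θ (|t.2.2 i j| / s)) :
    ∀ t ∈ globMin FR feasFB, propC2 lam beta r s t :=
  stmt8_general m n d lam beta f κ1 κ2 hκ1 hκ2 BS hBS τ BX hBX BY hBY feasFB hfeasFB θ hθ0 LX LY LS
    hLipX hLipY hLipS η hη hθη r s hrpos hrb hspos hsb FR hFR
end
end
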